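/- Let F be a CNF with a Resolution refutation D_1,…,D_S of width w, and for 0 ≤ t ≤ S set E'_t = ⋁_{i=1}^{t} ¬D_i (a w-DNF whose terms are the negations of the first t clauses of the refutation). Then for every 0 ≤ t ≤ S−1 there exists a w-DNF E_t whose set of terms is a subset of the set of terms of E'_t, together with a tree-like Res(w) derivation of E_t from F with at most 5(S−t) nodes. In particular, taking t = 0 yields a tree-like Res(w) refutation of F. -/

import Mathlib

/-- Propositional variables. -/
abbrev PVar := ℕ

/-- A literal: a variable together with a sign (`true` = the positive literal `x`,
`false` = the negated literal `¬x`). -/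
abbrev PLit := PVar × Bool

/-- Negation of a literal. -/
def PLit.neg (m : PLit) : PLit := (m.1, !m.2)

/-- A clause: a finite set of literals, read as their disjunction.
Its width is its cardinality. -/
abbrev PClause := Finset PLit

/-- A CNF formula: a finite set of clauses, read as their conjunction. -/
abbrev PCnf := Finset PClause

/-- A term: a finite set of literals, read as their conjunction. -/
abbrev PTerm := Finset PLit

/-- A DNF: a finite set of terms, read as their disjunction. -/
abbrev PDnf := Finset PTerm

/-- `D` is an `l`-DNF: every term of `D` has at most `l` literals. -/
def IsLDnf (l : ℕ) (D : PDnf) : Prop := ∀ T ∈ D, T.card ≤ l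

/-- The negation `¬C` of a clause `C = m₁ ∨ … ∨ m_t`, i.e. the term `¬m₁ ∧ … ∧ ¬m_t`. -/
def PClause.negTerm (C : PClause) : PTerm := C.image PLit.neg

/-- A clause viewed as a DNF consisting of singleton terms. -/
def PClause.toDnf (C : PClause) : PDnf := C.image (fun m => ({m} : PTerm))

/-- The disjunction `¬l₁ ∨ … ∨ ¬l_s` of the negations of the literals of the
term `T = l₁ ∧ … ∧ l_s`, as a DNF of singleton terms. -/
def PTerm.negLits (T : PTerm) : PDnf := T.image (fun m => ({m.neg} : PTerm))

/-- Binary proof trees whose nodes are labelled by DNFs. -/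
inductive PTree : Type where
  | leaf (D : PDnf) : PTree
  | node (D : PDnf) (t₁ t₂ : PTree) : PTree

namespace PTree

/-- The label at the root of the tree. -/
def concl : PTree → PDnf
  | .leaf D => D
  | .node D _ _ => D

/-- The number of leaves of the tree. -/
def leaves : PTree → ℕ
  | .leaf _ => 1
  | .node _ t₁ t₂ => t₁.leaves + t₂.leaves

/-- The total number of nodes (proof lines) of the tree. -/
def size : PTree → ℕ
  | .leaf _ => 1
  | .node _ t₁ t₂ => t₁.size + t₂.size + 1

/-- The list of all labels occurring in the tree. -/
def labels : PTree → List PDnf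
  | .leaf D => [D]
  | .node D t₁ t₂ => D :: (t₁.labels ++ t₂.labels)

/-- Structural validity of a tree-like Res derivation from the set `H` of
hypothesis DNFs: every leaf is a hypothesis or an axiom
`(l₁∧…∧l_s) ∨ ¬l₁ ∨ … ∨ ¬l_s` (with `s ≥ 1`), and every internal node with
children `A ∨ (l₁∧…∧l_s)` and `B ∨ ¬l₁ ∨ … ∨ ¬l_s` is labelled by the
cut `A ∨ B`. -/
def okStruct (H : Finset PDnf) : PTree → Prop
  | .leaf D => D ∈ H ∨ ∃ T : PTerm, T.Nonempty ∧ D = insert T T.negLits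
  | .node D t₁ t₂ => t₁.okStruct H ∧ t₂.okStruct H ∧
      ∃ (T : PTerm) (A B : PDnf), T.Nonempty ∧
        t₁.concl = insert T A ∧ t₂.concl = B ∪ T.negLits ∧ D = A ∪ B

/-- A valid tree-like Res(l) derivation from the hypotheses `H`: it is
structurally valid and every proof line is an `l`-DNF. -/
def valid (H : Finset PDnf) (l : ℕ) (t : PTree) : Prop :=
  t.okStruct H ∧ ∀ D ∈ t.labels, IsLDnf l D

/-- The number of leaves labelled by an axiom rather than by a hypothesis. -/
def axLeafCount (H : Finset PDnf) : PTree → ℕ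
  | .leaf D => if D ∈ H then 0 else 1
  | .node _ t₁ t₂ => t₁.axLeafCount H + t₂.axLeafCount H

end PTree

/-- The set of hypothesis DNFs associated to a CNF: each clause read as a DNF
of singleton terms. -/
def PCnf.toHyps (F : PCnf) : Finset PDnf := F.image PClause.toDnf

/-- `t` is a tree-like Res(l) refutation of the CNF `F`: a valid tree-like
Res(l) derivation from the clauses of `F` whose root is the empty DNF. -/
def TreeResRefutation (F : PCnf) (l : ℕ) (t : PTree) : Prop :=
  t.valid F.toHyps l ∧ t.concl = ∅

/-- Resolution inference: the clause `C` is obtained from two clauses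
`A ∨ x` and `B ∨ ¬x` occurring in `prev` by the resolution rule, yielding `A ∨ B`. -/
def ResStep (prev : List PClause) (C : PClause) : Prop :=
  ∃ A ∈ prev, ∃ B ∈ prev, ∃ x : PVar,
    (x, true) ∈ A ∧ (x, false) ∈ B ∧
    C = A.erase (x, true) ∪ B.erase (x, false)

/-- `π` is a resolution derivation from the CNF `F`: every clause of `π`
belongs to `F` or follows from two earlier clauses by the resolution rule. -/
def IsResDeriv (F : PCnf) (π : List PClause) : Prop :=
  ∀ i : Fin π.length, π.get i ∈ F ∨ ResStep (π.take i) (π.get i)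

/-- `π` is a resolution derivation of the clause `C` from the CNF `F`
(its last clause is `C`); a refutation when `C = ∅`. Its size is `π.length`
and its width is the maximum cardinality of a clause in `π`. -/
def ResDerivOf (F : PCnf) (C : PClause) (π : List PClause) : Prop :=
  IsResDeriv F π ∧ π.getLast? = some C

/-- A partial assignment: maps some variables to truth values. -/
abbrev PAssign := PVar → Option Bool

/-- The restriction `F|ρ`: delete every clause containing a literal satisfied
by `ρ`, and delete from the remaining clauses every literal falsified by `ρ`. -/
def PCnf.restrict (F : PCnf) (ρ : PAssign) : PCnf :=
  (F.filter (fun C => ∀ m ∈ C, ρ m.1 ≠ some m.2)).image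
    (fun C => C.filter (fun m => ρ m.1 ≠ some (!m.2)))

/-!
Walk back through the refutation. A derivation of a sub-DNF of `E'_{t+1}` either avoids the
term `¬D_{t+1}`, or that term is removed by a single cut: against the hypothesis `D_{t+1}` when
`D_{t+1} ∈ F`, and otherwise against `¬C₁ ∨ ¬C₂ ∨ D_{t+1}`, where `D_{t+1}` is the resolvent of
`C₁ ∨ x` and `C₂ ∨ ¬x`; this DNF comes from the two axioms `¬Cᵢ ∨ Cᵢ` by one cut on `x`, and its
terms `¬Cᵢ` lie in `E'_t`. Each step costs at most four nodes, and the empty last clause is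
derived outright within the same budget.
-/

lemma PLit.neg_neg (m : PLit) : m.neg.neg = m := by
  simp [PLit.neg]

namespace PClause

def resolve (C₁ C₂ : PClause) (x : PVar) : PClause :=
  C₁.erase (x, true) ∪ C₂.erase (x, false)

lemma negLits_negTerm (C : PClause) : C.negTerm.negLits = C.toDnf := by
  simp [PClause.negTerm, PTerm.negLits, PClause.toDnf, Finset.image_image, Function.comp_def,
    PLit.neg_neg]

lemma card_negTerm_le (C : PClause) : C.negTerm.card ≤ C.card :=
  Finset.card_image_le

@[simp]
lemma toDnf_empty : toDnf ∅ = ∅ := rfl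

lemma toDnf_insert (m : PLit) (C : PClause) :
    PClause.toDnf (insert m C) = insert {m} C.toDnf :=
  Finset.image_insert _ _ _

lemma toDnf_union (C₁ C₂ : PClause) : (C₁ ∪ C₂).toDnf = C₁.toDnf ∪ C₂.toDnf :=
  Finset.image_union _ _

lemma toDnf_eq_insert_erase {m : PLit} {C : PClause} (h : m ∈ C) :
    C.toDnf = insert {m} (PClause.toDnf (C.erase m)) := by
  rw [← toDnf_insert, Finset.insert_erase h]

end PClause

section IsLDnf

variable {w : ℕ}

lemma isLDnf_insert {T : PTerm} {D : PDnf} : IsLDnf w (insert T D) ↔ T.card ≤ w ∧ IsLDnf w D :=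
  Finset.forall_mem_insert _ _ _

lemma isLDnf_union {D₁ D₂ : PDnf} : IsLDnf w (D₁ ∪ D₂) ↔ IsLDnf w D₁ ∧ IsLDnf w D₂ :=
  Finset.forall_mem_union

lemma isLDnf_toDnf (hw : 1 ≤ w) (C : PClause) : IsLDnf w C.toDnf := by
  intro T hT
  obtain ⟨m, -, rfl⟩ := Finset.mem_image.mp hT
  simpa using hw

lemma isLDnf_negLits (hw : 1 ≤ w) (T : PTerm) : IsLDnf w T.negLits := by
  intro U hU
  obtain ⟨m, -, rfl⟩ := Finset.mem_image.mp hU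
  simpa using hw

end IsLDnf

lemma PTree.concl_mem_labels (t : PTree) : t.concl ∈ t.labels := by
  cases t <;> simp [PTree.concl, PTree.labels]

def TreeDerivable (H : Finset PDnf) (w : ℕ) (E : PDnf) (n : ℕ) : Prop :=
  ∃ tr : PTree, tr.valid H w ∧ tr.concl = E ∧ tr.size ≤ n

namespace TreeDerivable

variable {H : Finset PDnf} {w : ℕ}

lemma mono {E : PDnf} {n m : ℕ} (h : TreeDerivable H w E n) (hnm : n ≤ m) :
    TreeDerivable H w E m :=
  let ⟨tr, hv, hc, hs⟩ := h
  ⟨tr, hv, hc, hs.trans hnm⟩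

lemma isLDnf {E : PDnf} {n : ℕ} (h : TreeDerivable H w E n) : IsLDnf w E := by
  obtain ⟨tr, ⟨-, hw⟩, rfl, -⟩ := h
  exact hw _ tr.concl_mem_labels

lemma of_mem {E : PDnf} (hE : E ∈ H) (hw : IsLDnf w E) : TreeDerivable H w E 1 :=
  ⟨.leaf E, ⟨Or.inl hE, by simpa [PTree.labels]⟩, rfl, le_rfl⟩

lemma axiom_of_card_le {T : PTerm} (hT : T.Nonempty) (hw : T.card ≤ w) :
    TreeDerivable H w (insert T T.negLits) 1 := by
  have hw₁ : 1 ≤ w := (Finset.card_pos.mpr hT).trans_le hw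
  refine ⟨.leaf _, ⟨Or.inr ⟨T, hT, rfl⟩, ?_⟩, rfl, le_rfl⟩
  simpa [PTree.labels, isLDnf_insert] using ⟨hw, isLDnf_negLits hw₁ T⟩

lemma cut {T : PTerm} {A B : PDnf} {n₁ n₂ : ℕ} (h₁ : TreeDerivable H w (insert T A) n₁)
    (h₂ : TreeDerivable H w (B ∪ T.negLits) n₂) (hT : T.Nonempty) (hAB : IsLDnf w (A ∪ B)) :
    TreeDerivable H w (A ∪ B) (n₁ + n₂ + 1) := by
  obtain ⟨t₁, ⟨ok₁, hw₁⟩, hc₁, hs₁⟩ := h₁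
  obtain ⟨t₂, ⟨ok₂, hw₂⟩, hc₂, hs₂⟩ := h₂
  refine ⟨.node (A ∪ B) t₁ t₂, ⟨⟨ok₁, ok₂, T, A, B, hT, hc₁, hc₂, rfl⟩, ?_⟩, rfl, ?_⟩
  · simp only [PTree.labels, List.mem_cons, List.mem_append]
    rintro D (rfl | hD | hD)
    exacts [hAB, hw₁ D hD, hw₂ D hD]
  · simp only [PTree.size]
    omega

lemma negTerm_axiom {C : PClause} (hC : C.Nonempty) (hw : C.card ≤ w) :
    TreeDerivable H w (insert C.negTerm C.toDnf) 1 := by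
  simpa [PClause.negLits_negTerm] using
    axiom_of_card_le (H := H) (T := C.negTerm) (hC.image _) ((PClause.card_negTerm_le C).trans hw)

lemma resolve {C₁ C₂ : PClause} {x : PVar} (hx₁ : (x, true) ∈ C₁) (hx₂ : (x, false) ∈ C₂)
    (hw₁ : C₁.card ≤ w) (hw₂ : C₂.card ≤ w) :
    TreeDerivable H w ({C₁.negTerm, C₂.negTerm} ∪ (C₁.resolve C₂ x).toDnf) 3 := by
  set A : PDnf := insert C₁.negTerm (PClause.toDnf (C₁.erase (x, true)))
  set B : PDnf := insert C₂.negTerm (PClause.toDnf (C₂.erase (x, false)))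
  have ax₁ : TreeDerivable H w (insert {(x, true)} A) 1 := by
    simpa [A, PClause.toDnf_eq_insert_erase hx₁, Finset.insert_comm] using
      negTerm_axiom (H := H) ⟨_, hx₁⟩ hw₁
  have ax₂ : TreeDerivable H w (B ∪ PTerm.negLits {(x, true)}) 1 := by
    have hB : B ∪ PTerm.negLits {(x, true)} = insert C₂.negTerm C₂.toDnf := by
      rw [PClause.toDnf_eq_insert_erase hx₂]
      ext U
      simp [B, PTerm.negLits, PLit.neg]
    rw [hB]
    exact negTerm_axiom ⟨_, hx₂⟩ hw₂
  have hw : 1 ≤ w := (Finset.card_pos.mpr ⟨_, hx₁⟩).trans_le hw₁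
  have hAB : {C₁.negTerm, C₂.negTerm} ∪ (C₁.resolve C₂ x).toDnf = A ∪ B := by
    ext U
    simp only [A, B, PClause.resolve, PClause.toDnf_union, Finset.insert_union,
      Finset.singleton_union, Finset.union_insert, Finset.mem_insert, Finset.mem_union]
    tauto
  rw [hAB]
  refine ax₁.cut ax₂ (Finset.singleton_nonempty _) ?_
  simp only [A, B, isLDnf_union, isLDnf_insert, isLDnf_toDnf hw, and_true]
  exact ⟨(PClause.card_negTerm_le C₁).trans hw₁, (PClause.card_negTerm_le C₂).trans hw₂⟩

lemma cut_clause {D : PClause} {E : PDnf} {n : ℕ} (hDH : D.toDnf ∈ H) (hD : D.Nonempty)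
    (h : TreeDerivable H w (insert D.negTerm E) n) : TreeDerivable H w E (n + 2) := by
  obtain ⟨hwD, hwE⟩ := isLDnf_insert.mp h.isLDnf
  have hw : 1 ≤ w := (Finset.card_pos.mpr (hD.image _)).trans_le hwD
  have hleaf : TreeDerivable H w (∅ ∪ D.negTerm.negLits) 1 := by
    simpa [PClause.negLits_negTerm] using of_mem hDH (isLDnf_toDnf hw D)
  simpa using h.cut hleaf (hD.image _) (by simpa using hwE)

lemma cut_resolve {C₁ C₂ : PClause} {x : PVar} {E : PDnf} {n : ℕ}
    (hx₁ : (x, true) ∈ C₁) (hx₂ : (x, false) ∈ C₂) (hw₁ : C₁.card ≤ w) (hw₂ : C₂.card ≤ w)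
    (hD : (C₁.resolve C₂ x).Nonempty)
    (h : TreeDerivable H w (insert (C₁.resolve C₂ x).negTerm E) n) :
    TreeDerivable H w (E ∪ {C₁.negTerm, C₂.negTerm}) (n + 4) := by
  have hres := resolve (H := H) hx₁ hx₂ hw₁ hw₂
  rw [← PClause.negLits_negTerm] at hres
  refine h.cut hres (hD.image _) ?_
  refine isLDnf_union.mpr ⟨(isLDnf_insert.mp h.isLDnf).2, ?_⟩
  simpa [IsLDnf] using
    ⟨(PClause.card_negTerm_le C₁).trans hw₁, (PClause.card_negTerm_le C₂).trans hw₂⟩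

end TreeDerivable

/-- The terms of `E'_t`; note that `π[t]` is the paper's `D_{t+1}`. -/
def negTermsUpTo (π : List PClause) (t : ℕ) : PDnf :=
  ((π.take t).map PClause.negTerm).toFinset

section negTermsUpTo

variable {π : List PClause} {t : ℕ}

@[simp]
lemma negTermsUpTo_zero : negTermsUpTo π 0 = ∅ := rfl

lemma negTermsUpTo_succ (ht : t < π.length) :
    negTermsUpTo π (t + 1) = insert π[t].negTerm (negTermsUpTo π t) := by
  rw [negTermsUpTo, List.take_succ_eq_append_getElem ht, List.map_append, List.toFinset_append]
  ext T
  simp [negTermsUpTo, or_comm]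

lemma negTerm_mem_negTermsUpTo {C : PClause} (h : C ∈ π.take t) :
    C.negTerm ∈ negTermsUpTo π t :=
  List.mem_toFinset.mpr (List.mem_map_of_mem h)

end negTermsUpTo

def PrefixDerivable (F : PCnf) (w : ℕ) (π : List PClause) (t n : ℕ) : Prop :=
  ∃ E ⊆ negTermsUpTo π t, TreeDerivable F.toHyps w E n

namespace PrefixDerivable

variable {F : PCnf} {w : ℕ} {π : List PClause} {t n : ℕ}

lemma mono {m : ℕ} (h : PrefixDerivable F w π t n) (hnm : n ≤ m) : PrefixDerivable F w π t m :=
  let ⟨E, hE, hder⟩ := h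
  ⟨E, hE, hder.mono hnm⟩

lemma of_getElem_eq_empty (hπ : IsResDeriv F π) (hw : ∀ C ∈ π, C.card ≤ w) (ht : t < π.length)
    (hD : π[t] = ∅) : PrefixDerivable F w π t 4 := by
  rcases hπ ⟨t, ht⟩ with hF | ⟨C₁, hC₁, C₂, hC₂, x, hx₁, hx₂, hres⟩
  · have hF : (∅ : PClause) ∈ F := by simpa [hD] using hF
    refine ⟨∅, Finset.empty_subset _, (TreeDerivable.of_mem ?_ ?_).mono (by omega)⟩
    · exact Finset.mem_image_of_mem _ hF
    · simp [IsLDnf]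
  · change π[t] = C₁.resolve C₂ x at hres
    refine ⟨{C₁.negTerm, C₂.negTerm}, ?_, ?_⟩
    · simp [Finset.insert_subset_iff, negTerm_mem_negTermsUpTo hC₁, negTerm_mem_negTermsUpTo hC₂]
    · have hder := TreeDerivable.resolve (H := F.toHyps) hx₁ hx₂
        (hw _ (List.mem_of_mem_take hC₁)) (hw _ (List.mem_of_mem_take hC₂))
      simpa [← hres, hD] using hder.mono (by omega)

lemma of_succ (hπ : IsResDeriv F π) (hw : ∀ C ∈ π, C.card ≤ w) (ht : t < π.length)
    (hD : π[t] ≠ ∅) (h : PrefixDerivable F w π (t + 1) n) : PrefixDerivable F w π t (n + 4) := by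
  obtain ⟨E, hE, hder⟩ := h
  rw [negTermsUpTo_succ ht] at hE
  by_cases hmem : π[t].negTerm ∈ E
  swap
  · exact ⟨E, (Finset.subset_insert_iff_of_notMem hmem).mp hE, hder.mono (by omega)⟩
  have hE' : E.erase π[t].negTerm ⊆ negTermsUpTo π t := Finset.subset_insert_iff.mp hE
  rw [← Finset.insert_erase hmem] at hder
  rcases hπ ⟨t, ht⟩ with hF | ⟨C₁, hC₁, C₂, hC₂, x, hx₁, hx₂, hres⟩
  · exact ⟨_, hE', (hder.cut_clause (Finset.mem_image_of_mem _ hF)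
      (Finset.nonempty_iff_ne_empty.mpr hD)).mono (by omega)⟩
  · change π[t] = C₁.resolve C₂ x at hres
    rw [hres] at hD hder hE'
    refine ⟨_, Finset.union_subset hE' ?_, hder.cut_resolve hx₁ hx₂
      (hw _ (List.mem_of_mem_take hC₁)) (hw _ (List.mem_of_mem_take hC₂))
      (Finset.nonempty_iff_ne_empty.mpr hD)⟩
    simp [Finset.insert_subset_iff, negTerm_mem_negTermsUpTo hC₁, negTerm_mem_negTermsUpTo hC₂]

end PrefixDerivable

lemma ResDerivOf.getElem_length_sub_one {F : PCnf} {C : PClause} {π : List PClause}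
    (hπ : ResDerivOf F C π) (hlen : 0 < π.length) : π[π.length - 1] = C := by
  simpa [List.getLast?_eq_getElem?, List.getElem?_eq_getElem (by omega : π.length - 1 < π.length)]
    using hπ.2

lemma prefixDerivable_of_refutation {F : PCnf} {w : ℕ} {π : List PClause}
    (hπ : ResDerivOf F ∅ π) (hw : ∀ C ∈ π, C.card ≤ w) :
    ∀ t < π.length, PrefixDerivable F w π t (4 * (π.length - t)) := by
  suffices ∀ d t, t + d + 1 = π.length → PrefixDerivable F w π t (4 * (d + 1)) from
    fun t ht => (this (π.length - t - 1) t (by omega)).mono (by omega)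
  intro d
  induction d with
  | zero =>
    intro t ht
    exact PrefixDerivable.of_getElem_eq_empty hπ.1 hw (by omega)
      (by simpa [← ht] using hπ.getElem_length_sub_one (by omega))
  | succ d ih =>
    intro t ht
    by_cases hD : π[t]'(by omega) = ∅
    · exact (PrefixDerivable.of_getElem_eq_empty hπ.1 hw _ hD).mono (by omega)
    · exact PrefixDerivable.of_succ hπ.1 hw _ hD (ih (t + 1) (by omega))

/-- Let `D₁, …, D_S` be a resolution refutation of `F` of width `w`, and
let `E'_t = ⋁_{i=1}^t ¬Dᵢ`.  Then for every `0 ≤ t ≤ S-1` there is a `w`-DNF `E_t` whose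
terms form a subset of the terms of `E'_t`, with a tree-like Res(w) derivation from `F`
with at most `5(S-t)` nodes; in particular (`t = 0`) `F` has a tree-like Res(w) refutation
with at most `5S` nodes. -/
theorem intermediate_dnf_derivations
    (w S : ℕ) (F : PCnf) (π : List PClause)
    (hπ : ResDerivOf F ∅ π) (hw : ∀ C ∈ π, C.card ≤ w) (hS : π.length = S) :
    (∀ t : ℕ, t ≤ S - 1 →
      ∃ E : PDnf, E ⊆ ((π.take t).map PClause.negTerm).toFinset ∧
        ∃ tr : PTree, tr.valid F.toHyps w ∧ tr.concl = E ∧ tr.size ≤ 5 * (S - t)) ∧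
    (∃ tr : PTree, TreeResRefutation F w tr ∧ tr.size ≤ 5 * S) := by
  subst hS
  have hlen : 0 < π.length := List.length_pos_of_ne_nil (by rintro rfl; simp [ResDerivOf] at hπ)
  have key (t : ℕ) (ht : t ≤ π.length - 1) : PrefixDerivable F w π t (5 * (π.length - t)) :=
    (prefixDerivable_of_refutation hπ hw t (by omega)).mono (by omega)
  refine ⟨key, ?_⟩
  obtain ⟨E, hE, tr, hv, hc, hs⟩ := key 0 (Nat.zero_le _)
  rw [negTermsUpTo_zero, Finset.subset_empty] at hE
  exact ⟨tr, ⟨hv, hc.trans hE⟩, by simpa using hs⟩
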